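/- For n ≥ 5, the number of distinct leverage centrality values among the vertices of ×_m P_n is at most C(m+2, 2) (the (m+1)-st triangle number). -/

import Mathlib

open SimpleGraph Finset

/-- Degree of a vertex (classical decidability so arbitrary graphs work). -/
noncomputable def deg {V : Type*} [Fintype V] (G : SimpleGraph V) (v : V) : ℕ :=
  letI : DecidableRel G.Adj := Classical.decRel _
  G.degree v

/-- Neighbor finset of a vertex. -/
noncomputable def nbrs {V : Type*} [Fintype V] (G : SimpleGraph V) (v : V) : Finset V :=
  letI : DecidableRel G.Adj := Classical.decRel _
  G.neighborFinset v

/-- Leverage centrality of a vertex. -/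
noncomputable def lev {V : Type*} [Fintype V] (G : SimpleGraph V) (v : V) : ℚ :=
  (1 / (deg G v : ℚ)) *
    ∑ u ∈ nbrs G v, ((deg G v : ℚ) - (deg G u : ℚ)) / ((deg G v : ℚ) + (deg G u : ℚ))

/-- The lattice `×_m P_n`: Cartesian product of `m` paths on `n` vertices.
Vertices are `m`-tuples of coordinates in `Fin n`; two vertices are adjacent
iff they differ in exactly one coordinate, by exactly 1. -/
def lattice (m n : ℕ) : SimpleGraph (Fin m → Fin n) where
  Adj v w := ∃ i, ((v i : ℕ) + 1 = (w i : ℕ) ∨ (w i : ℕ) + 1 = (v i : ℕ)) ∧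
    ∀ j, j ≠ i → v j = w j
  symm := by
    constructor
    rintro v w ⟨i, h, hj⟩
    exact ⟨i, h.symm, fun j hne => (hj j hne).symm⟩
  loopless := by
    constructor
    rintro v ⟨i, h, -⟩
    omega

/-!
The neighbours of a vertex `v` of `×_m P_n` are obtained by moving one coordinate one step along
the path, so `deg v` is the sum of the path degrees of the coordinates, and moving coordinate `i`
to `a` changes `deg v` by `deg a - deg (v i)`. Hence the part of the leverage sum coming from
coordinate `i` depends only on `deg v` and on whether `v i` is a boundary, near-boundary or
interior point of the path (this needs `n ≥ 4`). So `lev v` is a function of the multiset of the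
positions of the coordinates, which ranges over `Sym PathPosition m`, a set of size `C(m+2, 2)`.
-/

theorem mem_nbrs {V : Type*} [Fintype V] (G : SimpleGraph V) (v u : V) :
    u ∈ nbrs G v ↔ G.Adj v u := by
  classical
  exact SimpleGraph.mem_neighborFinset G v u

theorem deg_eq_card_nbrs {V : Type*} [Fintype V] (G : SimpleGraph V) (v : V) :
    deg G v = #(nbrs G v) := rfl

namespace SimpleGraph

variable {α ι : Type*}

/-- The Cartesian (box) product of `ι` copies of `G`. -/
def boxPow (G : SimpleGraph α) (ι : Type*) : SimpleGraph (ι → α) where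
  Adj v w := ∃ i, G.Adj (v i) (w i) ∧ ∀ j, j ≠ i → v j = w j
  symm := by
    constructor
    rintro v w ⟨i, h, hj⟩
    exact ⟨i, h.symm, fun j hne => (hj j hne).symm⟩
  loopless := by
    constructor
    rintro v ⟨i, h, -⟩
    exact G.loopless.irrefl _ h

variable (G : SimpleGraph α)

theorem boxPow_adj {v w : ι → α} :
    (G.boxPow ι).Adj v w ↔ ∃ i, G.Adj (v i) (w i) ∧ ∀ j, j ≠ i → v j = w j := Iff.rfl

variable [DecidableEq ι]

theorem boxPow_adj_iff_exists_update {v w : ι → α} :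
    (G.boxPow ι).Adj v w ↔ ∃ i a, G.Adj (v i) a ∧ Function.update v i a = w := by
  rw [boxPow_adj]
  constructor
  · rintro ⟨i, h, hj⟩
    refine ⟨i, w i, h, funext fun j => ?_⟩
    by_cases hji : j = i
    · subst hji; simp
    · rw [Function.update_of_ne hji, hj j hji]
  · rintro ⟨i, a, h, rfl⟩
    exact ⟨i, by simpa using h, fun j hj => (Function.update_of_ne hj _ _).symm⟩

variable [DecidableEq α] [Fintype ι] [Fintype α]

theorem nbrs_boxPow (v : ι → α) :
    nbrs (G.boxPow ι) v = univ.biUnion fun i => (nbrs G (v i)).image (Function.update v i) := by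
  ext w
  simp [mem_nbrs, boxPow_adj_iff_exists_update]

theorem sum_nbrs_boxPow {M : Type*} [AddCommMonoid M] (v : ι → α) (f : (ι → α) → M) :
    ∑ w ∈ nbrs (G.boxPow ι) v, f w = ∑ i, ∑ a ∈ nbrs G (v i), f (Function.update v i a) := by
  rw [nbrs_boxPow, sum_biUnion]
  · refine sum_congr rfl fun i _ => sum_image fun a _ b _ h => ?_
    simpa using congrFun h i
  · intro i _ j _ hij
    simp only [Function.onFun, Finset.disjoint_left, mem_image, mem_nbrs, not_exists, not_and]
    rintro _ ⟨a, ha, rfl⟩ b _ h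
    exact ha.ne (by simpa [Function.update_of_ne hij] using congrFun h i)

theorem deg_boxPow (v : ι → α) : deg (G.boxPow ι) v = ∑ i, deg G (v i) := by
  simp only [deg_eq_card_nbrs, card_eq_sum_ones, sum_nbrs_boxPow]

theorem deg_boxPow_update_add (v : ι → α) (i : ι) (a : α) :
    deg (G.boxPow ι) (Function.update v i a) + deg G (v i) = deg (G.boxPow ι) v + deg G a := by
  rw [deg_boxPow, deg_boxPow, ← Function.comp_def (deg G), Function.comp_update,
    sum_update_of_mem (mem_univ i), ← add_sum_erase _ _ (mem_univ i), sdiff_singleton_eq_erase]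
  simp only [Function.comp_apply]
  ring

theorem lev_boxPow (v : ι → α) :
    lev (G.boxPow ι) v = 1 / (deg (G.boxPow ι) v : ℚ) * ∑ i, ∑ a ∈ nbrs G (v i),
      ((deg G (v i) : ℚ) - deg G a) / (2 * deg (G.boxPow ι) v + deg G a - deg G (v i)) := by
  rw [lev, sum_nbrs_boxPow]
  refine congrArg _ (sum_congr rfl fun i _ => sum_congr rfl fun a _ => ?_)
  have h : (deg (G.boxPow ι) (Function.update v i a) : ℚ) =
      deg (G.boxPow ι) v + deg G a - deg G (v i) := by
    rw [eq_sub_iff_add_eq]; exact_mod_cast deg_boxPow_update_add G v i a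
  rw [h]
  congr 1 <;> ring

end SimpleGraph

inductive PathPosition
  | boundary
  | nearBoundary
  | interior
  deriving DecidableEq

namespace PathPosition

instance : Fintype PathPosition :=
  ⟨{boundary, nearBoundary, interior}, fun p => by cases p <;> simp⟩

theorem card : Fintype.card PathPosition = 3 := rfl

/-- The paper's coordinates `1, …, n` are `0, …, n - 1` here. -/
def of (n x : ℕ) : PathPosition :=
  if x = 0 ∨ x = n - 1 then boundary else if x = 1 ∨ x = n - 2 then nearBoundary else interior

def degree : PathPosition → ℕ
  | boundary => 1
  | _ => 2

/-- The contribution of one coordinate to `deg v * lev v` when `deg v = d`. -/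
def leverageSum (d : ℚ) : PathPosition → ℚ
  | boundary => -1 / (2 * d + 1)
  | nearBoundary => 1 / (2 * d - 1)
  | interior => 0

theorem degree_of (n x : ℕ) : (of n x).degree = if x = 0 ∨ x = n - 1 then 1 else 2 := by
  unfold of
  split_ifs <;> rfl

def profileLeverage (s : Multiset PathPosition) : ℚ :=
  let d : ℚ := (s.map degree).sum
  1 / d * (s.map (leverageSum d)).sum

end PathPosition

section PathGraph

variable {n : ℕ}

theorem map_valEmbedding_nbrs_pathGraph (x : Fin n) :
    (nbrs (pathGraph n) x).map Fin.valEmbedding =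
      (if 0 < (x : ℕ) then {(x : ℕ) - 1} else ∅) ∪
        (if (x : ℕ) + 1 < n then {(x : ℕ) + 1} else ∅ : Finset ℕ) := by
  have hx := x.isLt
  ext j
  have hrhs : j ∈ (if 0 < (x : ℕ) then {(x : ℕ) - 1} else ∅) ∪
      (if (x : ℕ) + 1 < n then {(x : ℕ) + 1} else ∅ : Finset ℕ) ↔
        j < n ∧ ((x : ℕ) + 1 = j ∨ j + 1 = x) := by
    split_ifs <;> simp <;> omega
  simp only [hrhs, mem_map, mem_nbrs, pathGraph_adj, Fin.valEmbedding_apply, Fin.exists_iff]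
  constructor
  · rintro ⟨k, hk, h, rfl⟩
    exact ⟨hk, h⟩
  · rintro ⟨hj, h⟩
    exact ⟨j, hj, h, rfl⟩

theorem sum_nbrs_pathGraph {M : Type*} [AddCommMonoid M] (g : ℕ → M) (x : Fin n) :
    ∑ k ∈ nbrs (pathGraph n) x, g k =
      (if 0 < (x : ℕ) then g (x - 1) else 0) + (if (x : ℕ) + 1 < n then g (x + 1) else 0) := by
  refine (sum_map _ Fin.valEmbedding g).symm.trans ?_
  rw [map_valEmbedding_nbrs_pathGraph, sum_union (by split_ifs <;> simp)]
  congr 1 <;> split_ifs <;> simp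

theorem deg_pathGraph (hn : 2 ≤ n) (x : Fin n) :
    deg (pathGraph n) x = (PathPosition.of n x).degree := by
  have h := sum_nbrs_pathGraph (fun _ => 1) x
  rw [← card_eq_sum_ones, ← deg_eq_card_nbrs] at h
  rw [h, PathPosition.degree_of]
  have := x.isLt
  split_ifs <;> omega

theorem sum_nbrs_pathGraph_leverage (hn : 4 ≤ n) (x : Fin n) (d : ℚ) :
    ∑ k ∈ nbrs (pathGraph n) x, ((deg (pathGraph n) x : ℚ) - deg (pathGraph n) k) /
        (2 * d + deg (pathGraph n) k - deg (pathGraph n) x) =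
      (PathPosition.of n x).leverageSum d := by
  simp only [deg_pathGraph (by omega : 2 ≤ n)]
  rw [sum_nbrs_pathGraph (fun j => (((PathPosition.of n x).degree : ℚ) -
    (PathPosition.of n j).degree) / (2 * d + (PathPosition.of n j).degree -
      (PathPosition.of n x).degree)) x]
  have hx := x.isLt
  obtain h | h | h | h | h : (x : ℕ) = 0 ∨ (x : ℕ) = n - 1 ∨ (x : ℕ) = 1 ∨ (x : ℕ) = n - 2 ∨
      (2 ≤ (x : ℕ) ∧ (x : ℕ) + 3 ≤ n) := by omega
  all_goals
    -- `degree_of` first: whether a neighbour is near-boundary or interior need not be decided.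
    simp only [PathPosition.degree_of]
    simp (disch := omega) only [PathPosition.of, if_pos, if_neg, PathPosition.leverageSum]
    push_cast
    ring

end PathGraph

section Lattice

variable {m n : ℕ}

theorem lattice_eq_boxPow (m n : ℕ) : lattice m n = (pathGraph n).boxPow (Fin m) := by
  ext v w
  simp only [lattice, SimpleGraph.boxPow_adj, pathGraph_adj]

def positionProfile (n : ℕ) (v : Fin m → Fin n) : Sym PathPosition m :=
  ⟨univ.val.map fun i => PathPosition.of n (v i), by simp⟩

theorem coe_positionProfile (v : Fin m → Fin n) :
    (positionProfile n v : Multiset PathPosition) = univ.val.map fun i => PathPosition.of n (v i) :=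
  rfl

theorem lev_lattice (hn : 4 ≤ n) (v : Fin m → Fin n) :
    lev (lattice m n) v = PathPosition.profileLeverage (positionProfile n v) := by
  have hdeg : deg ((pathGraph n).boxPow (Fin m)) v =
      ((positionProfile n v : Multiset PathPosition).map PathPosition.degree).sum := by
    simp only [SimpleGraph.deg_boxPow, deg_pathGraph (by omega : 2 ≤ n), coe_positionProfile,
      Multiset.map_map, sum_eq_multiset_sum, Function.comp_def]
  rw [lattice_eq_boxPow, SimpleGraph.lev_boxPow]
  simp only [sum_nbrs_pathGraph_leverage hn, hdeg, PathPosition.profileLeverage]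
  simp only [coe_positionProfile, Multiset.map_map, sum_eq_multiset_sum, Function.comp_def]

end Lattice

theorem lattice_distinct_leverage_bound (m n : ℕ) (hn : 5 ≤ n) :
    ((Finset.univ : Finset (Fin m → Fin n)).image (lev (lattice m n))).card ≤
      (m + 2).choose 2 := by
  have hsub : univ.image (lev (lattice m n)) ⊆
      (univ : Finset (Sym PathPosition m)).image
        fun s : Sym PathPosition m => PathPosition.profileLeverage s := by
    intro q hq
    obtain ⟨v, -, rfl⟩ := mem_image.1 hq
    rw [lev_lattice (by omega)]
    exact mem_image_of_mem _ (mem_univ _)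
  calc _ ≤ _ := card_le_card hsub
    _ ≤ Fintype.card (Sym PathPosition m) := card_image_le
    _ = (m + 2).choose 2 := by
      rw [Sym.card_sym_eq_choose, PathPosition.card, show 3 + m - 1 = m + 2 by omega,
        Nat.choose_symm_add]
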